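/- (Lemma 1, first identity.) Let n ≥ 1, α > 0, λ ∈ ℝ with α + λ + 1 > 0, and t > 0. Let π_n(x;t) be the monic orthogonal polynomial of degree n with respect to w(x,t) = (x+t)^λ x^α e^{−x}, with squared norm h_n(t) and γ_n(t)² = 1/h_n(t). Then the auxiliary quantity R_n(t) = (λ/h_n(t)) ∫₀^∞ π_n(x;t)² w(x,t)/(x+t) dx satisfies R_n(t) = 1 − α γ_n(t)² π_n(0;t) ∫₀^∞ π_n(x;t) w(x,t)/x dx. -/

import Mathlib

/-!
Differentiate `π_n² w` and integrate over `(0, ∞)`. The boundary terms vanish because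
`α > 0` and `w` decays exponentially, which leaves
`0 = ∫ 2 π_n π_n' w + λ ∫ π_n² w / (x + t) + α ∫ π_n² w / x - h_n`.
The first integral vanishes by orthogonality, as `deg π_n' < n`. Writing
`π_n(x) = x q(x) + π_n(0)` with `deg q < n`, orthogonality to `q` gives
`∫ π_n² w / x = π_n(0) ∫ π_n w / x`.
-/

open MeasureTheory Set Filter Topology Asymptotics Polynomial Real

theorem Polynomial.map_eq_zero_of_degree_lt {R M : Type*} [Ring R] [Nontrivial R]
    [AddCommGroup M] [Module R M] {p : ℕ → R[X]} (hmonic : ∀ k, (p k).Monic)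
    (hdeg : ∀ k, (p k).natDegree = k)
    (L : R[X] →ₗ[R] M) {n : ℕ} (hL : ∀ k < n, L (p k) = 0) {q : R[X]} (hq : q.degree < n) :
    L q = 0 := by
  let S : Sequence R := ⟨p, fun k => by rw [degree_eq_natDegree (hmonic k).ne_zero, hdeg]⟩
  have hspan : q ∈ Submodule.span R (S '' Iio n) := by
    rw [S.span_degreeLT fun k _ => by simp [S, (hmonic k).leadingCoeff]]
    exact mem_degreeLT.2 hq
  exact (Submodule.span_le (p := LinearMap.ker L)).2
    (by rintro _ ⟨k, hk, rfl⟩; exact hL k hk) hspan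

noncomputable section

namespace PerturbedLaguerre

def weight (t μ β x : ℝ) : ℝ := (x + t) ^ μ * x ^ β * exp (-x)

def weightedIntegral (t μ β : ℝ) (q : ℝ[X]) : ℝ :=
  ∫ x in Ioi 0, q.eval x * weight t μ β x

variable {t μ β : ℝ}

lemma weight_div_add {x : ℝ} (hxt : x + t ≠ 0) :
    weight t μ β x / (x + t) = weight t (μ - 1) β x := by
  rw [weight, weight, rpow_sub_one hxt]
  ring

lemma weight_div_self {x : ℝ} (hx : x ≠ 0) : weight t μ β x / x = weight t μ (β - 1) x := by
  rw [weight, weight, rpow_sub_one hx]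
  ring

lemma continuousAt_weight {x : ℝ} (hxt : x + t ≠ 0) (hx : x ≠ 0 ∨ 0 ≤ β) :
    ContinuousAt (weight t μ β) x :=
  (((continuousAt_id.add continuousAt_const).rpow_const (.inl hxt)).mul
    (continuousAt_id.rpow_const hx)).mul (continuous_exp.comp continuous_neg).continuousAt

lemma hasDerivAt_weight {x : ℝ} (hxt : x + t ≠ 0) (hx : x ≠ 0) :
    HasDerivAt (weight t μ β)
      (μ * weight t (μ - 1) β x + β * weight t μ (β - 1) x - weight t μ β x) x := by
  have hshift : HasDerivAt (fun y : ℝ => (y + t) ^ μ) (μ * (x + t) ^ (μ - 1)) x := by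
    simpa using ((hasDerivAt_id x).add_const t).rpow_const (.inl hxt)
  have hexp : HasDerivAt (fun y : ℝ => exp (-y)) (-exp (-x)) x := by
    simpa using (hasDerivAt_neg x).exp
  refine ((hshift.fun_mul (hasDerivAt_rpow_const (p := β) (.inl hx))).fun_mul hexp).congr_deriv ?_
  simp only [weight]
  ring

lemma isLittleO_eval_exp_pos_mul_atTop (r : ℝ[X]) {b : ℝ} (hb : 0 < b) :
    (fun x => r.eval x) =o[atTop] fun x => exp (b * x) := by
  refine (isBigO_atTop_of_degree_le r (X ^ r.natDegree) ?_).trans_isLittleO ?_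
  · rw [degree_X_pow]
    exact degree_le_natDegree
  · simpa using isLittleO_pow_exp_pos_mul_atTop r.natDegree hb

lemma isLittleO_add_rpow_exp_pos_mul_atTop (t s : ℝ) {b : ℝ} (hb : 0 < b) :
    (fun x : ℝ => (x + t) ^ s) =o[atTop] fun x => exp (b * x) := by
  have hshift := (isLittleO_rpow_exp_pos_mul_atTop s hb).comp_tendsto
    (tendsto_atTop_add_const_right _ t tendsto_id)
  refine hshift.trans_isBigO (IsBigO.of_bound (exp (b * t)) (Eventually.of_forall fun x => ?_))
  simp only [Function.comp, id, norm_eq_abs, abs_exp, ← exp_add]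
  exact le_of_eq (by ring_nf)

lemma isBigO_eval_mul_weight_exp_neg (r : ℝ[X]) (t μ β : ℝ) :
    (fun x => r.eval x * weight t μ β x) =O[atTop] fun x => exp (-(1 / 2) * x) := by
  have hb : (0 : ℝ) < 1 / 6 := by norm_num
  have hsub := ((isLittleO_eval_exp_pos_mul_atTop r hb).mul
    (isLittleO_add_rpow_exp_pos_mul_atTop t μ hb)).mul (isLittleO_rpow_exp_pos_mul_atTop β hb)
  refine (hsub.isBigO.mul (isBigO_refl (fun x => exp (-x)) atTop)).congr
    (fun x => by simp only [weight]; ring) (fun x => ?_)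
  simp only [← exp_add]
  ring_nf

lemma tendsto_eval_mul_weight_atTop (r : ℝ[X]) (t μ β : ℝ) :
    Tendsto (fun x => r.eval x * weight t μ β x) atTop (𝓝 0) :=
  (isBigO_eval_mul_weight_exp_neg r t μ β).trans_tendsto
    (tendsto_exp_atBot.comp (tendsto_id.const_mul_atTop_of_neg (by norm_num)))

lemma integrableOn_eval_mul_weight (r : ℝ[X]) (ht : 0 < t) (hβ : -1 < β) :
    IntegrableOn (fun x => r.eval x * weight t μ β x) (Ioi 0) := by
  rw [← Ioc_union_Ioi_eq_Ioi zero_le_one]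
  refine IntegrableOn.union ?_ ?_
  · have hrpow : IntegrableOn (fun x : ℝ => x ^ β) (Icc 0 1) := by
      rw [integrableOn_Icc_iff_integrableOn_Ioc,
        ← intervalIntegrable_iff_integrableOn_Ioc_of_le zero_le_one]
      exact intervalIntegral.intervalIntegrable_rpow' hβ
    have hcont : ContinuousOn (fun x => r.eval x * (x + t) ^ μ * exp (-x)) (Icc 0 1) := by
      intro x hx
      exact ((r.continuousAt.mul ((continuousAt_id.add continuousAt_const).rpow_const
        (.inl (by simp only [Pi.add_apply, id]; linarith [hx.1])))).mul
        (continuous_exp.comp continuous_neg).continuousAt).continuousWithinAt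
    refine ((hrpow.mul_continuousOn hcont isCompact_Icc).mono_set Ioc_subset_Icc_self).congr_fun
      (fun x _ => by simp only [weight]; ring) measurableSet_Ioc
  · refine integrable_of_isBigO_exp_neg (by norm_num) (fun x hx => ?_)
      (isBigO_eval_mul_weight_exp_neg r t μ β)
    have hx0 : 0 < x := lt_of_lt_of_le one_pos hx
    exact (r.continuousAt.mul (continuousAt_weight (by linarith) (.inl hx0.ne'))).continuousWithinAt

lemma isLinearMap_weightedIntegral (ht : 0 < t) (hβ : -1 < β) :
    IsLinearMap ℝ (weightedIntegral t μ β) where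
  map_add q r := by
    simp only [weightedIntegral, eval_add, add_mul]
    exact integral_add (integrableOn_eval_mul_weight q ht hβ)
      (integrableOn_eval_mul_weight r ht hβ)
  map_smul c q := by
    simp only [weightedIntegral, eval_smul, smul_eq_mul, mul_assoc]
    exact integral_const_mul c _

lemma weight_zero (hβ : β ≠ 0) : weight t μ β 0 = 0 := by
  simp [weight, zero_rpow hβ]

lemma weightedIntegral_derivative (q : ℝ[X]) (ht : 0 < t) (hβ : 0 < β) :
    weightedIntegral t μ β (derivative q) + μ * weightedIntegral t (μ - 1) β q
      + β * weightedIntegral t μ (β - 1) q = weightedIntegral t μ β q := by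
  have hderiv : ∀ x ∈ Ioi (0 : ℝ), HasDerivAt (fun x => q.eval x * weight t μ β x)
      ((derivative q).eval x * weight t μ β x + μ * (q.eval x * weight t (μ - 1) β x)
        + β * (q.eval x * weight t μ (β - 1) x) - q.eval x * weight t μ β x) x := by
    intro x hx
    refine ((q.hasDerivAt x).mul
      (hasDerivAt_weight (by linarith [mem_Ioi.1 hx]) (mem_Ioi.1 hx).ne')).congr_deriv ?_
    ring
  have hcont : ContinuousWithinAt (fun x => q.eval x * weight t μ β x) (Ici 0) 0 :=
    (q.continuousAt.mul
      (continuousAt_weight (by simpa using ht.ne') (.inr hβ.le))).continuousWithinAt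
  have hβ₁ : -1 < β := by linarith
  have h₁ := integrableOn_eval_mul_weight (μ := μ) (derivative q) ht hβ₁
  have h₂ := (integrableOn_eval_mul_weight (μ := μ - 1) q ht hβ₁).const_mul μ
  have h₃ := (integrableOn_eval_mul_weight (μ := μ) q ht
    (show -1 < β - 1 by linarith)).const_mul β
  have h₄ := integrableOn_eval_mul_weight (μ := μ) q ht hβ₁
  have h₁₂₃ := (h₁.fun_add h₂).fun_add h₃
  have hFTC := integral_Ioi_of_hasDerivAt_of_tendsto hcont hderiv (h₁₂₃.sub' h₄)
    (tendsto_eval_mul_weight_atTop q t μ β)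
  rw [integral_sub h₁₂₃ h₄, integral_add (h₁.fun_add h₂) h₃, integral_add h₁ h₂,
    integral_const_mul, integral_const_mul, weight_zero hβ.ne', mul_zero, sub_zero] at hFTC
  simp only [weightedIntegral]
  linarith

lemma weightedIntegral_X_mul (q : ℝ[X]) :
    weightedIntegral t μ (β - 1) (X * q) = weightedIntegral t μ β q := by
  refine setIntegral_congr_fun measurableSet_Ioi fun x hx => ?_
  have hx0 : x ≠ 0 := (mem_Ioi.1 hx).ne'
  rw [eval_mul, eval_X, ← weight_div_self hx0]
  field_simp

lemma weightedIntegral_sub_one_mul (r q : ℝ[X]) (ht : 0 < t) (hβ : 0 < β) :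
    weightedIntegral t μ (β - 1) (r * q)
      = weightedIntegral t μ β (r * q.divX) + q.eval 0 * weightedIntegral t μ (β - 1) r := by
  have hsplit : r * q = X * (r * q.divX) + q.eval 0 • r := by
    conv_lhs => rw [← X_mul_divX_add q]
    rw [coeff_zero_eq_eval_zero, smul_eq_C_mul]
    ring
  have hlin := isLinearMap_weightedIntegral (μ := μ) ht (show -1 < β - 1 by linarith)
  rw [hsplit, hlin.map_add, hlin.map_smul, smul_eq_mul, weightedIntegral_X_mul]

end PerturbedLaguerre

end

open PerturbedLaguerre in
theorem lemma1_first_identity_general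
    (n : ℕ) (α lam t : ℝ) (hα : 0 < α) (ht : 0 < t)
    (p : ℕ → Polynomial ℝ) (h : ℕ → ℝ)
    (hmonic : ∀ k, (p k).Monic)
    (hdeg : ∀ k, (p k).natDegree = k)
    (hpos : ∀ k, 0 < h k)
    (horth : ∀ j k,
      ∫ x in Set.Ioi (0 : ℝ),
          (p j).eval x * (p k).eval x * ((x + t) ^ lam * x ^ α * Real.exp (-x))
        = if j = k then h j else 0) :
    (lam / h n) * (∫ x in Set.Ioi (0 : ℝ),
        (p n).eval x ^ 2 * ((x + t) ^ lam * x ^ α * Real.exp (-x)) / (x + t))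
      = 1 - α * (1 / h n) * (p n).eval 0 *
          ∫ x in Set.Ioi (0 : ℝ),
            (p n).eval x * ((x + t) ^ lam * x ^ α * Real.exp (-x)) / x := by
  have hweighted : ∀ j k, weightedIntegral t lam α (p j * p k) = if j = k then h j else 0 :=
    fun j k => by simpa only [weightedIntegral, weight, eval_mul] using horth j k
  have hlin := isLinearMap_weightedIntegral (μ := lam) ht (show -1 < α by linarith)
  have horth_lt : ∀ q : ℝ[X], q.degree < n → weightedIntegral t lam α (p n * q) = 0 :=
    fun q hq => map_eq_zero_of_degree_lt hmonic hdeg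
      ((IsLinearMap.mk' _ hlin).comp (LinearMap.mulLeft ℝ (p n)))
      (fun k hk => by simp [hweighted, hk.ne']) hq
  have hdegree : (p n).degree = n := by rw [degree_eq_natDegree (hmonic n).ne_zero, hdeg]
  have hderiv : weightedIntegral t lam α (p n * (C 2 * derivative (p n))) = 0 :=
    horth_lt _ (by
      rw [degree_C_mul two_ne_zero, ← hdegree]; exact degree_derivative_lt (hmonic n).ne_zero)
  have hdivX : weightedIntegral t lam α (p n * (p n).divX) = 0 :=
    horth_lt _ (by rw [← hdegree]; exact degree_divX_lt (hmonic n).ne_zero)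
  have hpearson := weightedIntegral_derivative (μ := lam) (p n ^ 2) ht hα
  rw [derivative_sq, show C 2 * p n * derivative (p n) = p n * (C 2 * derivative (p n)) by ring,
    hderiv, sq, weightedIntegral_sub_one_mul _ _ ht hα, hdivX, hweighted, if_pos rfl] at hpearson
  have hleft : ∫ x in Ioi 0, (p n).eval x ^ 2 * ((x + t) ^ lam * x ^ α * exp (-x)) / (x + t)
      = weightedIntegral t (lam - 1) α (p n * p n) :=
    setIntegral_congr_fun measurableSet_Ioi fun x hx => by
      rw [eval_mul, ← sq, mul_div_assoc, ← weight_div_add (by linarith [mem_Ioi.1 hx])]; rfl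
  have hright : ∫ x in Ioi 0, (p n).eval x * ((x + t) ^ lam * x ^ α * exp (-x)) / x
      = weightedIntegral t lam (α - 1) (p n) :=
    setIntegral_congr_fun measurableSet_Ioi fun x hx => by
      rw [mul_div_assoc, ← weight_div_self (mem_Ioi.1 hx).ne']; rfl
  rw [hleft, hright]
  field_simp [(hpos n).ne']
  linear_combination hpearson

/-- Lemma 1, first identity: the auxiliary quantity
`R_n(t) = (λ/h_n(t)) ∫₀^∞ π_n(x;t)² w(x,t)/(x+t) dx` for the perturbed Laguerre weight
`w(x,t) = (x+t)^λ x^α e^{−x}` satisfies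
`R_n(t) = 1 − α γ_n(t)² π_n(0;t) ∫₀^∞ π_n(x;t) w(x,t)/x dx`, where `γ_n(t)² = 1/h_n(t)`. -/
theorem lemma1_first_identity
    (n : ℕ) (hn : 1 ≤ n) (α lam t : ℝ) (hα : 0 < α) (hsum : α + lam + 1 > 0) (ht : 0 < t)
    (p : ℕ → Polynomial ℝ) (h : ℕ → ℝ)
    (hmonic : ∀ k, (p k).Monic)
    (hdeg : ∀ k, (p k).natDegree = k)
    (hpos : ∀ k, 0 < h k)
    (horth : ∀ j k,
      ∫ x in Set.Ioi (0 : ℝ),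
          (p j).eval x * (p k).eval x * ((x + t) ^ lam * x ^ α * Real.exp (-x))
        = if j = k then h j else 0) :
    (lam / h n) * (∫ x in Set.Ioi (0 : ℝ),
        (p n).eval x ^ 2 * ((x + t) ^ lam * x ^ α * Real.exp (-x)) / (x + t))
      = 1 - α * (1 / h n) * (p n).eval 0 *
          ∫ x in Set.Ioi (0 : ℝ),
            (p n).eval x * ((x + t) ^ lam * x ^ α * Real.exp (-x)) / x :=
  lemma1_first_identity_general n α lam t hα ht p h hmonic hdeg hpos horth
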